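/- Let H be a Hermitian n×n complex matrix and ρ a density matrix on ℂⁿ such that the variance of H in ρ vanishes, i.e. Tr(ρ · H · H) = (Tr(ρ · H))². Then ρ is an eigenstate of H in the operator sense: H · ρ = Tr(ρ · H) • ρ. Consequently, ρ is strong symmetric with respect to the U(1) representation t ↦ exp(−itH): for every t ∈ ℝ, exp(−itH) · ρ = e^{−it·μ} • ρ where μ = Tr(ρ · H) (a real number). -/

import Mathlib

open Matrix
open scoped ComplexOrder

lemma aux_trace_zero {m k : ℕ} (A : Matrix (Fin m) (Fin k) ℂ)
    (h : (Aᴴ * A).trace = 0) : A = 0 := by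
  have h' : ∑ i, ∑ j, star (A j i) * A j i = 0 := by
    simpa [Matrix.trace, Matrix.diag, Matrix.mul_apply, Matrix.conjTranspose_apply] using h
  have hz : ∀ i ∈ (Finset.univ : Finset (Fin k)), ∑ j, star (A j i) * A j i = 0 :=
    (Finset.sum_eq_zero_iff_of_nonneg (fun i _ =>
      Finset.sum_nonneg fun j _ => star_mul_self_nonneg _)).mp h'
  ext j i
  have := (Finset.sum_eq_zero_iff_of_nonneg (fun j _ => star_mul_self_nonneg (A j i))).mp
    (hz i (Finset.mem_univ i)) j (Finset.mem_univ j)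
  have h2 : (Complex.normSq (A j i) : ℂ) = 0 := by
    rw [Complex.normSq_eq_conj_mul_self]; rw [Complex.star_def] at this; exact_mod_cast this
  simpa using Complex.normSq_eq_zero.mp (by exact_mod_cast h2)

lemma aux_exp_eigen {m : ℕ} (A ρ : Matrix (Fin m) (Fin m) ℂ) (c : ℂ)
    (h : A * ρ = c • ρ) :
    NormedSpace.exp A * ρ = Complex.exp c • ρ := by
  letI : SeminormedRing (Matrix (Fin m) (Fin m) ℂ) := Matrix.linftyOpSemiNormedRing
  letI : NormedRing (Matrix (Fin m) (Fin m) ℂ) := Matrix.linftyOpNormedRing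
  letI : NormedAlgebra ℂ (Matrix (Fin m) (Fin m) ℂ) := Matrix.linftyOpNormedAlgebra
  have hpow : ∀ k : ℕ, A ^ k * ρ = c ^ k • ρ := by
    intro k
    induction k with
    | zero => simp
    | succ k ih =>
      rw [pow_succ, Matrix.mul_assoc, h, Matrix.mul_smul, ih, smul_smul, pow_succ, mul_comm]
  have hsum : Summable (fun k : ℕ => ((k.factorial : ℂ))⁻¹ • A ^ k) :=
    NormedSpace.expSeries_summable' (𝕂 := ℂ) A
  have hsum2 : Summable (fun k : ℕ => ((k.factorial : ℂ))⁻¹ • c ^ k) :=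
    NormedSpace.expSeries_summable' (𝕂 := ℂ) c
  have key : NormedSpace.exp A * ρ = ∑' k : ℕ, (((k.factorial : ℂ))⁻¹ • A ^ k) * ρ := by
    rw [NormedSpace.exp_eq_tsum ℂ]
    exact ((ContinuousLinearMap.mul ℂ (Matrix (Fin m) (Fin m) ℂ)).flip ρ).map_tsum hsum
  rw [key]
  have : ∀ k : ℕ, (((k.factorial : ℂ))⁻¹ • A ^ k) * ρ = (((k.factorial : ℂ))⁻¹ • c ^ k) • ρ := by
    intro k
    rw [Matrix.smul_mul, hpow, smul_smul, smul_eq_mul]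
  simp_rw [this]
  rw [hsum2.tsum_smul_const]
  congr 1
  rw [Complex.exp_eq_exp_ℂ, NormedSpace.exp_eq_tsum ℂ]

/-- **A density matrix with vanishing variance of a Hermitian `H` is an operator
eigenstate of `H`, hence strong symmetric for the `U(1)` representation `t ↦ exp(−itH)`.** -/
theorem vanishing_variance_strong_symmetric
    {n : ℕ}
    (H : Matrix (Fin n) (Fin n) ℂ) (hH : Hᴴ = H)
    (ρ : Matrix (Fin n) (Fin n) ℂ)
    (hρ : ρ.PosSemidef) (hρtr : ρ.trace = 1)
    (hvar : (ρ * (H * H)).trace = ((ρ * H).trace) ^ 2) :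
    ∃ μ : ℝ, (μ : ℂ) = (ρ * H).trace ∧
      H * ρ = (ρ * H).trace • ρ ∧
      ∀ t : ℝ, NormedSpace.exp ((-(Complex.I * (t : ℂ))) • H) * ρ =
        Complex.exp (-(Complex.I * (t : ℂ) * (μ : ℂ))) • ρ := by
  set μ : ℂ := (ρ * H).trace with hμ
  -- μ is real
  have hμreal : star μ = μ := by
    rw [hμ, ← Matrix.trace_conjTranspose, Matrix.conjTranspose_mul, hH, hρ.1,
      Matrix.trace_mul_comm]
  have hre : (μ.re : ℂ) = μ :=
    Complex.conj_eq_iff_re.mp (by rw [starRingEnd_apply]; exact hμreal)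
  obtain ⟨B, hB⟩ : ∃ B : Matrix (Fin n) (Fin n) ℂ, ρ = Bᴴ * B := by
    open scoped MatrixOrder Matrix.Norms.L2Operator in
    exact CStarAlgebra.nonneg_iff_eq_star_mul_self.mp hρ.nonneg
  set C : Matrix (Fin n) (Fin n) ℂ := H - μ • 1 with hC
  have hCherm : Cᴴ = C := by
    rw [hC, Matrix.conjTranspose_sub, hH, Matrix.conjTranspose_smul,
      Matrix.conjTranspose_one]
    congr 1
    rw [hμreal]
  -- trace of (B*C)ᴴ (B*C) is zero
  have hexpand : ρ * (C * C) = ρ * (H * H) - μ • (ρ * H) - μ • (ρ * H) + (μ * μ) • ρ := by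
    rw [hC]
    simp only [Matrix.mul_sub, Matrix.sub_mul, Matrix.smul_mul, Matrix.mul_smul,
      Matrix.mul_one, Matrix.one_mul, smul_smul]
    module
  have htr0 : ((B * C)ᴴ * (B * C)).trace = 0 := by
    have : (B * C)ᴴ * (B * C) = C * (ρ * C) := by
      rw [Matrix.conjTranspose_mul, hCherm, hB]
      noncomm_ring
    rw [this, Matrix.trace_mul_comm, Matrix.mul_assoc, ← Matrix.mul_assoc]
    rw [show ρ * C * C = ρ * (C * C) by rw [Matrix.mul_assoc]]
    rw [hexpand]
    simp only [Matrix.trace_add, Matrix.trace_sub, Matrix.trace_smul, hvar, hρtr,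
      smul_eq_mul, mul_one, ← hμ]
    ring
  have hBC : B * C = 0 := aux_trace_zero _ htr0
  have hCρ : C * ρ = 0 := by
    have h1 : Cᴴ * Bᴴ = 0 := by
      rw [← Matrix.conjTranspose_mul, hBC, Matrix.conjTranspose_zero]
    calc C * ρ = C * Bᴴ * B := by rw [hB, Matrix.mul_assoc]
    _ = Cᴴ * Bᴴ * B := by rw [hCherm]
    _ = 0 := by rw [h1, Matrix.zero_mul]
  have hHρ : H * ρ = μ • ρ := by
    have := hCρ
    rw [hC, Matrix.sub_mul, Matrix.smul_mul, Matrix.one_mul, sub_eq_zero] at this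
    exact this
  refine ⟨μ.re, hre.trans hμ, hHρ, ?_⟩
  intro t
  have heig : ((-(Complex.I * (t : ℂ))) • H) * ρ = (-(Complex.I * (t : ℂ) * μ)) • ρ := by
    rw [Matrix.smul_mul, hHρ, smul_smul]
    ring_nf
  rw [aux_exp_eigen ((-(Complex.I * (t : ℂ))) • H) ρ (-(Complex.I * (t : ℂ) * μ)) heig, hre]
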